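/- Proposition 4 (Blasiak–Kleinberg–Lubetzky, undirected approximation): There exists a positive integer N such that for every n ≥ N and every undirected side information graph G on n vertices, χ(Ḡ) ≤ 4·(n / log₂ n) · β(G); that is, for all sufficiently large n the clique covering scheme approximates the broadcast rate of every n-vertex undirected index coding problem within a multiplicative factor of 4n / log₂ n. -/

import Mathlib

/-- A `(t, r)` index code for the side-information relation `E` on vertex type `V`:
an edge `i → j` (i.e., `E i j`) means that receiver `j` has message `i` as side
information.  Messages are `t`-bit strings `Fin t → Bool`, the broadcast index is an
`r`-bit string `Fin r → Bool`, and every receiver `j` can recover its message `x j`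
from the index and its side information. -/
structure IndexCode {V : Type*} (E : V → V → Prop) (t r : ℕ) where
  enc : (V → (Fin t → Bool)) → (Fin r → Bool)
  dec : ∀ j : V, (Fin r → Bool) → (({i : V // E i j}) → (Fin t → Bool)) → (Fin t → Bool)
  correct : ∀ (x : V → (Fin t → Bool)) (j : V),
    dec j (enc x) (fun i => x i.1) = x j

/-- The broadcast rate `β = inf { r / t : a (t, r) index code exists }`. -/
noncomputable def broadcastRate {V : Type*} (E : V → V → Prop) : ℝ :=
  sInf { q : ℝ | ∃ t r : ℕ, 0 < t ∧ Nonempty (IndexCode E t r) ∧ q = (r : ℝ) / t }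

/-!
An independent set `S` gives `β(G) ≥ |S|`, and in particular `β(G) ≥ 1`. Put `L = log₂ n`.
If `G` has an independent set of size `⌈L / 4⌉`, the trivial bound `χ(Ḡ) ≤ n` suffices.
Otherwise, by the Erdős–Szekeres bound, every `2 ^ (⌈L / 4⌉ + ⌈L / 3⌉)` vertices span a clique
of size `⌈L / 3⌉`; peeling such cliques off covers `G` by at most `3n / L + 2 ^ (7L / 12 + 2)`
cliques, and the second term is at most `n / L` for large `n` because `log n = o(n ^ (5 / 12))`.
-/

open Finset Real Filter

namespace IndexCode

variable {V : Type*} {E : V → V → Prop}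

noncomputable def sendAll [Fintype V] (E : V → V → Prop) : IndexCode E 1 (Fintype.card V) where
  enc x i := x ((Fintype.equivFin V).symm i) 0
  dec j b _ _ := b (Fintype.equivFin V j)
  correct x j := by
    funext b
    simp [Subsingleton.elim b 0]

/-- Messages on a set `S` without internal side information can be chosen freely while all
other messages are fixed, and every receiver in `S` must then recover its message from the
index alone, so the encoder is injective on `2 ^ (t * #S)` message tuples. -/
theorem mul_card_le {t r : ℕ} (code : IndexCode E t r) (S : Finset V)
    (hS : ∀ i ∈ S, ∀ j ∈ S, ¬E i j) : t * #S ≤ r := by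
  classical
  let extend (y : S → Fin t → Bool) (v : V) : Fin t → Bool :=
    if h : v ∈ S then y ⟨v, h⟩ else fun _ => false
  have hside : ∀ y y' j, j ∈ S → ∀ i : {i // E i j}, extend y i = extend y' i :=
    fun y y' j hj i => by
      have hi : i.1 ∉ S := fun hi => hS i hi j hj i.2
      simp only [extend, dif_neg hi]
  have hinj : Function.Injective fun y => code.enc (extend y) := by
    intro y y' h
    funext ⟨j, hj⟩
    calc y ⟨j, hj⟩ = extend y j := by simp [extend, hj]
      _ = code.dec j (code.enc (extend y)) fun i => extend y i := (code.correct _ j).symm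
      _ = code.dec j (code.enc (extend y')) fun i => extend y' i := by
          rw [show code.enc (extend y) = code.enc (extend y') from h]
          congr 1
          exact funext (hside y y' j hj)
      _ = extend y' j := code.correct _ j
      _ = y' ⟨j, hj⟩ := by simp [extend, hj]
  have hcard := Fintype.card_le_of_injective _ hinj
  simp only [Fintype.card_fun, Fintype.card_bool, Fintype.card_fin, Fintype.card_coe,
    ← pow_mul] at hcard
  exact (Nat.pow_le_pow_iff_right one_lt_two).1 hcard

end IndexCode

theorem card_le_broadcastRate {V : Type*} [Fintype V] {E : V → V → Prop} (S : Finset V)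
    (hS : ∀ i ∈ S, ∀ j ∈ S, ¬E i j) : (#S : ℝ) ≤ broadcastRate E := by
  refine le_csInf ⟨_, 1, _, one_pos, ⟨IndexCode.sendAll E⟩, rfl⟩ ?_
  rintro _ ⟨t, r, ht, ⟨code⟩, rfl⟩
  rw [le_div_iff₀ (by exact_mod_cast ht), mul_comm]
  exact_mod_cast code.mul_card_le S hS

namespace SimpleGraph

variable {V : Type*}

theorem IsIndepSet.card_le_broadcastRate [Fintype V] {G : SimpleGraph V} {S : Finset V}
    (hS : G.IsIndepSet S) : (#S : ℝ) ≤ broadcastRate G.Adj :=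
  _root_.card_le_broadcastRate S fun _ hi _ hj hij =>
    hS (mem_coe.2 hi) (mem_coe.2 hj) hij.ne hij

theorem one_le_broadcastRate [Fintype V] [Nonempty V] (G : SimpleGraph V) :
    1 ≤ broadcastRate G.Adj := by
  have hv : G.IsIndepSet ({Classical.arbitrary V} : Finset V) := by
    simp [IsIndepSet]
  simpa using hv.card_le_broadcastRate

end SimpleGraph

namespace SimpleGraph

variable {V : Type*}

theorem card_filter_adj_add_card_filter_compl_adj [DecidableEq V] (G : SimpleGraph V)
    [DecidableRel G.Adj] {A : Finset V} {v : V} (hv : v ∈ A) :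
    #{w ∈ A | G.Adj v w} + #{w ∈ A | Gᶜ.Adj v w} + 1 = #A := by
  rw [← card_union_of_disjoint (disjoint_filter.2 fun _ _ h h' => (compl_adj G v _).1 h' |>.2 h),
    ← card_erase_add_one hv]
  congr 2
  ext w
  simp only [mem_union, mem_filter, mem_erase, compl_adj]
  by_cases hvw : v = w
  · simp [hvw]
  · tauto

/-- Erdős–Szekeres: `R(s, k) ≤ 2 ^ (s + k)`. -/
theorem exists_isNClique_compl_or_isNClique (G : SimpleGraph V) {s k : ℕ} {A : Finset V}
    (hA : 2 ^ (s + k) ≤ #A) : (∃ S ⊆ A, Gᶜ.IsNClique s S) ∨ ∃ C ⊆ A, G.IsNClique k C := by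
  classical
  induction hm : s + k generalizing G s k A with
  | zero => exact .inl ⟨∅, empty_subset _, isNClique_empty.2 (by omega)⟩
  | succ m ih =>
    obtain _ | s := s
    · exact .inl ⟨∅, empty_subset _, isNClique_empty.2 rfl⟩
    obtain _ | k := k
    · exact .inr ⟨∅, empty_subset _, isNClique_empty.2 rfl⟩
    obtain ⟨v, hv⟩ : A.Nonempty := card_pos.1 (lt_of_lt_of_le (by positivity) hA)
    have grow : ∀ (H : SimpleGraph V) [DecidableRel H.Adj] {j : ℕ} {C : Finset V},
        C ⊆ {w ∈ A | H.Adj v w} → H.IsNClique j C → ∃ D ⊆ A, H.IsNClique (j + 1) D :=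
      fun H _ _ C hC hCj => ⟨insert v C, insert_subset hv (hC.trans (filter_subset _ _)),
        hCj.insert fun w hw => (mem_filter.1 (hC hw)).2⟩
    have hsplit := G.card_filter_adj_add_card_filter_compl_adj hv
    rw [show s + 1 + (k + 1) = m + 1 by omega, pow_succ'] at hA
    rcases (by omega : 2 ^ m ≤ #{w ∈ A | G.Adj v w} ∨ 2 ^ m ≤ #{w ∈ A | Gᶜ.Adj v w})
      with hN | hN
    · rcases ih G (by rwa [show s + 1 + k = m by omega]) (by omega) with ⟨S, hS, hSs⟩ | ⟨C, hC, hCk⟩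
      · exact .inl ⟨S, hS.trans (filter_subset _ _), hSs⟩
      · exact .inr (grow G hC hCk)
    · rcases ih Gᶜ (s := k + 1) (k := s) (by rwa [show k + 1 + s = m by omega])
        (by omega) with ⟨C, hC, hCk⟩ | ⟨S, hS, hSs⟩
      · exact .inr ⟨C, hC.trans (filter_subset _ _), by rwa [compl_compl] at hCk⟩
      · exact .inl (grow Gᶜ hS hSs)

theorem colorable_compl_of_forall_isClique (G : SimpleGraph V) (𝒞 : Finset (Finset V))
    (hclique : ∀ C ∈ 𝒞, G.IsClique (C : Set V)) (hcover : ∀ v, ∃ C ∈ 𝒞, v ∈ C) :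
    Gᶜ.Colorable #𝒞 := by
  choose f hf𝒞 hf using hcover
  have hcol : Gᶜ.Coloring 𝒞 := Coloring.mk (fun v => ⟨f v, hf𝒞 v⟩) fun {u w} huw heq => by
    have hfw : w ∈ f u := by rw [show f u = f w from congrArg Subtype.val heq]; exact hf w
    exact ((compl_adj G u w).1 huw).2 (hclique _ (hf𝒞 u) (hf u) hfw ((compl_adj G u w).1 huw).1)
  simpa using hcol.colorable

theorem exists_cliqueCover_card_le (G : SimpleGraph V) {k M : ℕ} (hk : 0 < k)
    (hM : ∀ A : Finset V, M ≤ #A → ∃ C ⊆ A, G.IsNClique k C) (A : Finset V) :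
    ∃ 𝒞 : Finset (Finset V), (∀ C ∈ 𝒞, G.IsClique (C : Set V)) ∧
      (∀ v ∈ A, ∃ C ∈ 𝒞, v ∈ C) ∧ #𝒞 ≤ #A / k + M := by
  classical
  induction A using Finset.strongInduction with
  | _ A ih =>
  by_cases hA : #A < M
  · refine ⟨A.image singleton, ?_, fun v hv => ⟨{v}, mem_image_of_mem _ hv, mem_singleton_self v⟩,
      card_image_le.trans (hA.le.trans (Nat.le_add_left _ _))⟩
    simp
  obtain ⟨C, hCA, hC⟩ := hM A (by omega)
  have hCne : C.Nonempty := card_pos.1 (hC.card_eq ▸ hk)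
  obtain ⟨𝒞, hclique, hcover, hcard⟩ := ih (A \ C) (sdiff_ssubset hCA hCne)
  refine ⟨insert C 𝒞, forall_mem_insert _ _ _ |>.2 ⟨hC.isClique, hclique⟩, fun v hv => ?_, ?_⟩
  · by_cases hvC : v ∈ C
    · exact ⟨C, mem_insert_self _ _, hvC⟩
    · obtain ⟨D, hD, hvD⟩ := hcover v (mem_sdiff.2 ⟨hv, hvC⟩)
      exact ⟨D, mem_insert_of_mem hD, hvD⟩
  · have hkA : k ≤ #A := hC.card_eq ▸ card_le_card hCA
    have hdiv : (#A - k) / k + 1 = #A / k := by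
      rw [← Nat.add_div_right _ hk, Nat.sub_add_cancel hkA]
    rw [card_sdiff_of_subset hCA, hC.card_eq] at hcard
    have := card_insert_le C 𝒞
    omega

theorem chromaticNumber_compl_le_of_indepSetFree [Fintype V] (G : SimpleGraph V) {s k : ℕ}
    (hk : 0 < k) (hG : G.IndepSetFree s) :
    Gᶜ.chromaticNumber ≤ (Fintype.card V / k + 2 ^ (s + k) : ℕ) := by
  have hM : ∀ A : Finset V, 2 ^ (s + k) ≤ #A → ∃ C ⊆ A, G.IsNClique k C := fun A hA =>
    (G.exists_isNClique_compl_or_isNClique hA).resolve_left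
      fun ⟨S, _, hS⟩ => hG S ((isNClique_compl G).1 hS)
  obtain ⟨𝒞, hclique, hcover, hcard⟩ := G.exists_cliqueCover_card_le hk hM univ
  exact ((G.colorable_compl_of_forall_isClique 𝒞 hclique fun v => hcover v (mem_univ v)).mono
    (by simpa using hcard)).chromaticNumber_le

end SimpleGraph

theorem eventually_four_mul_rpow_le_div_logb :
    ∀ᶠ x : ℝ in atTop, 4 * x ^ (7 / 12 : ℝ) ≤ x / logb 2 x := by
  filter_upwards [(isLittleO_log_rpow_atTop (r := 5 / 12) (by norm_num)).bound
    (c := log 2 / 4) (by positivity), eventually_gt_atTop 1] with x hlog hx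
  have hx0 : 0 < x := one_pos.trans hx
  rw [norm_of_nonneg (log_nonneg hx.le), norm_of_nonneg (by positivity)] at hlog
  have hL : logb 2 x ≤ x ^ (5 / 12 : ℝ) / 4 := by
    rw [logb, div_le_iff₀ (log_pos one_lt_two)]
    linarith
  rw [le_div_iff₀ (logb_pos one_lt_two hx)]
  calc 4 * x ^ (7 / 12 : ℝ) * logb 2 x ≤ 4 * x ^ (7 / 12 : ℝ) * (x ^ (5 / 12 : ℝ) / 4) := by
        gcongr
    _ = x ^ (7 / 12 + 5 / 12 : ℝ) := by rw [rpow_add hx0]; ring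
    _ = x := by norm_num

theorem SimpleGraph.chromaticNumber_compl_toNat_le_mul_broadcastRate {V : Type*} [Fintype V]
    (G : SimpleGraph V) (hV : 2 ≤ Fintype.card V)
    (hgrowth : 4 * (Fintype.card V : ℝ) ^ (7 / 12 : ℝ) ≤
      Fintype.card V / logb 2 (Fintype.card V)) :
    (Gᶜ.chromaticNumber.toNat : ℝ) ≤
      4 * (Fintype.card V / logb 2 (Fintype.card V)) * broadcastRate G.Adj := by
  set n := Fintype.card V
  set L := logb 2 n
  have hn : (1 : ℝ) < n := by exact_mod_cast hV
  have hL : 0 < L := logb_pos one_lt_two hn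
  set s := ⌈L / 4⌉₊
  set k := ⌈L / 3⌉₊
  by_cases hfree : G.IndepSetFree s
  · have hk : 0 < k := Nat.ceil_pos.2 (by positivity)
    have hdiv : ((n / k : ℕ) : ℝ) ≤ 3 * (n / L) := calc
      ((n / k : ℕ) : ℝ) ≤ n / k := Nat.cast_div_le
      _ ≤ n / (L / 3) := by gcongr; exact Nat.le_ceil _
      _ = 3 * (n / L) := by field_simp
    have hpow : ((2 ^ (s + k) : ℕ) : ℝ) ≤ n / L := calc
      ((2 ^ (s + k) : ℕ) : ℝ) = (2 : ℝ) ^ ((s + k : ℕ) : ℝ) := by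
        rw [rpow_natCast]; push_cast; ring
      _ ≤ 2 ^ (L * (7 / 12) + 2) := by
        refine rpow_le_rpow_of_exponent_le one_le_two ?_
        have := Nat.ceil_lt_add_one (a := L / 4) (by positivity)
        have := Nat.ceil_lt_add_one (a := L / 3) (by positivity)
        push_cast
        linarith
      _ = 4 * n ^ (7 / 12 : ℝ) := by
        rw [rpow_add two_pos, rpow_mul zero_le_two, rpow_logb two_pos one_lt_two.ne' (by linarith)]
        norm_num
        ring
      _ ≤ n / L := hgrowth
    calc (Gᶜ.chromaticNumber.toNat : ℝ) ≤ ((n / k + 2 ^ (s + k) : ℕ) : ℝ) := by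
          exact_mod_cast ENat.toNat_le_of_le_natCast
            (G.chromaticNumber_compl_le_of_indepSetFree hk hfree)
      _ ≤ 4 * (n / L) * 1 := by push_cast at hpow ⊢; linarith
      _ ≤ 4 * (n / L) * broadcastRate G.Adj := by
          have : Nonempty V := Fintype.card_pos_iff.1 (by omega)
          gcongr
          exact G.one_le_broadcastRate
  · obtain ⟨S, hS⟩ : ∃ S, G.IsNIndepSet s S := by simpa [SimpleGraph.IndepSetFree] using hfree
    have hβ : (s : ℝ) ≤ broadcastRate G.Adj := hS.card_eq ▸ hS.isIndepSet.card_le_broadcastRate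
    calc (Gᶜ.chromaticNumber.toNat : ℝ) ≤ n := by
          exact_mod_cast ENat.toNat_le_of_le_natCast Gᶜ.chromaticNumber_le_card
      _ = 4 * (n / L) * (L / 4) := by field_simp
      _ ≤ 4 * (n / L) * broadcastRate G.Adj := by
          gcongr
          exact (Nat.le_ceil _).trans hβ

/-- **Proposition 4 (Blasiak–Kleinberg–Lubetzky).**  There is a positive integer `N`
such that for every `n ≥ N` and every undirected side information graph `G` on `n`
vertices, `χ(Ḡ) ≤ 4 * (n / log₂ n) * β(G)`: the clique covering scheme approximates the
broadcast rate within a factor of `4n / log₂ n` for all sufficiently large `n`. -/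
theorem bkl_undirected_approx :
    ∃ N : ℕ, 0 < N ∧ ∀ n : ℕ, N ≤ n → ∀ G : SimpleGraph (Fin n),
      ((Gᶜ.chromaticNumber.toNat : ℝ)) ≤
        4 * ((n : ℝ) / Real.logb 2 (n : ℝ)) * broadcastRate G.Adj := by
  obtain ⟨N, hN⟩ := eventually_atTop.1
    ((tendsto_natCast_atTop_atTop.eventually eventually_four_mul_rpow_le_div_logb).and
      (eventually_ge_atTop 2))
  refine ⟨N + 1, N.succ_pos, fun n hn G => ?_⟩
  obtain ⟨hgrowth, hn2⟩ := hN n (by omega)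
  simpa using G.chromaticNumber_compl_toNat_le_mul_broadcastRate (by simpa using hn2)
    (by simpa using hgrowth)
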